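/- Let C₃³ = { (a₁,a₂,a₃,a₄) ∈ 𝔽₃⁴ : a₁+a₂+a₃+a₄ = 0 } with S₄ acting by permuting coordinates. For every subgroup H of S₄, the first group cohomology H¹(H, C₃³) vanishes. -/

import Mathlib

/-!
Restriction to a Sylow 3-subgroup `P` of `H` is injective on `H¹`, because a cocycle vanishing
on `P` can be averaged over `H ⧸ P`, whose order is invertible in `𝔽₃`. As `|S₄| = 24`, `P` is
trivial or generated by a 3-cycle `σ`. A cocycle on `⟨σ⟩` is determined by its value at `σ`,
which is killed by the norm `1 + σ + σ²`; on sum-zero vectors that kernel is the image of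
`σ - 1`, a finite check. Finally a coboundary with values in `𝔽₃⁴` is moved into `C₃³` by a
constant vector, since `4` is invertible in `𝔽₃`.
-/

open Finset

/-- The permutation action of the statement: `(g • F) a = F (g⁻¹ • a)`. -/
abbrev arrowDistribMulAction {G α M : Type*} [Group G] [MulAction G α] [AddMonoid M] :
    DistribMulAction G (α → M) :=
  { arrowAction with smul_zero := fun _ => rfl, smul_add := fun _ _ _ => rfl }

attribute [local instance] arrowDistribMulAction

theorem arrowDistribMulAction_smulCommClass {G α M k : Type*} [Group G] [MulAction G α]
    [AddMonoid M] [SMul k M] : SMulCommClass G k (α → M) :=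
  ⟨fun _ _ _ => rfl⟩

attribute [local instance] arrowDistribMulAction_smulCommClass

set_option maxRecDepth 20000 in
theorem Equiv.Perm.exists_smul_sub_eq_of_pow_three_eq_one :
    ∀ σ : Equiv.Perm (Fin 4), σ ^ 3 = 1 → σ ≠ 1 →
      ∀ x : Fin 4 → ZMod 3, ∑ i, x i = 0 → x + σ • x + σ ^ 2 • x = 0 →
        ∃ b : Fin 4 → ZMod 3, σ • b - b = x := by
  decide

namespace groupCohomology

section Cocycle

variable {G A : Type*} [Group G] [AddCommGroup A] [DistribMulAction G A] {f : G → A}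

theorem IsCocycle₁.sub_coboundary (hf : IsCocycle₁ f) (b : A) :
    IsCocycle₁ fun g => f g - (g • b - b) := by
  intro g h
  dsimp only
  rw [hf g h, mul_smul, smul_sub, smul_sub]
  abel

theorem map_pow_of_isCocycle₁ (hf : IsCocycle₁ f) (g : G) (n : ℕ) :
    f (g ^ n) = ∑ i ∈ range n, g ^ i • f g := by
  induction n with
  | zero => simp [map_one_of_isCocycle₁ hf]
  | succ n ih => rw [pow_succ, hf, ih, sum_range_succ, add_comm]

def IsCocycle₁.ker (hf : IsCocycle₁ f) : Subgroup G where
  carrier := {g | f g = 0}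
  mul_mem' {g h} hg hh := by simp_all [hf g h]
  one_mem' := map_one_of_isCocycle₁ hf
  inv_mem' {g} hg := by
    change f g⁻¹ = 0
    rw [← smul_eq_zero_iff_eq g, map_inv_of_isCocycle₁ hf, hg, neg_zero]

theorem IsCocycle₁.isCoboundary₁_of_le_ker {k : Type*} [CommRing k] [Module k A]
    [SMulCommClass G k A] (hf : IsCocycle₁ f) {P : Subgroup G} [P.FiniteIndex]
    (hP : IsUnit (P.index : k)) (hPf : P ≤ hf.ker) : IsCoboundary₁ f := by
  classical
  have : Fintype (G ⧸ P) := Fintype.ofFinite _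
  let F : G ⧸ P → A := Quotient.lift f fun g h hgh => by
    rw [← mul_inv_cancel_left g h, hf, hPf (QuotientGroup.leftRel_apply.mp hgh), smul_zero,
      zero_add]
  have hF : ∀ (g : G) (x : G ⧸ P), F (g • x) = g • F x + f g := by
    intro g x
    induction x using QuotientGroup.induction_on with
    | H h => exact hf g h
  -- Averaging `f` over the cosets: translating by `g` permutes the cosets.
  have hT : ∀ g : G, g • ∑ x, F x + (P.index : k) • f g = ∑ x, F x := by
    intro g
    calc g • ∑ x, F x + (P.index : k) • f g = ∑ x, F (g • x) := by
          simp only [hF, sum_add_distrib, smul_sum, sum_const, card_univ, Subgroup.index,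
            Nat.card_eq_fintype_card, Nat.cast_smul_eq_nsmul]
      _ = ∑ x, F x := Equiv.sum_comp (MulAction.toPerm g) F
  obtain ⟨u, hu⟩ := hP
  set T := ∑ x, F x
  refine ⟨-((↑u⁻¹ : k) • T), fun g => ?_⟩
  calc g • -((↑u⁻¹ : k) • T) - -((↑u⁻¹ : k) • T) = (↑u⁻¹ : k) • (T - g • T) := by
        rw [smul_neg, smul_comm, smul_sub]; abel
    _ = f g := by
        rw [sub_eq_iff_eq_add'.mpr (hT g).symm, smul_smul, ← hu, Units.inv_mul, one_smul]

theorem IsCocycle₁.isCoboundary₁_of_isCoboundary₁_restrict {k : Type*} [CommRing k]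
    [Module k A] [SMulCommClass G k A] (hf : IsCocycle₁ f) {P : Subgroup G} [P.FiniteIndex]
    (hP : IsUnit (P.index : k)) (hres : IsCoboundary₁ fun p : P => f p) : IsCoboundary₁ f := by
  obtain ⟨b, hb⟩ := hres
  obtain ⟨x, hx⟩ := (hf.sub_coboundary b).isCoboundary₁_of_le_ker hP fun p hp =>
    sub_eq_zero.mpr (hb ⟨p, hp⟩).symm
  refine ⟨x + b, fun g => ?_⟩
  rw [smul_add, add_sub_add_comm, hx g, sub_add_cancel]

theorem IsCocycle₁.isCoboundary₁_of_zpowers_eq_top (hf : IsCocycle₁ f) {σ : G}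
    (hσ : Subgroup.zpowers σ = ⊤) {b : A} (hb : σ • b - b = f σ) : IsCoboundary₁ f := by
  have hker : (hf.sub_coboundary b).ker = ⊤ :=
    top_le_iff.mp (hσ ▸ Subgroup.zpowers_le.mpr (sub_eq_zero.mpr hb.symm))
  refine ⟨b, fun g => ?_⟩
  have hg : g ∈ (hf.sub_coboundary b).ker := hker ▸ Subgroup.mem_top g
  exact (sub_eq_zero.mp hg).symm

end Cocycle

section Fin4

variable {G : Type*} [Group G] [MulAction G (Fin 4)]

theorem IsCocycle₁.isCoboundary₁_of_card_eq_three [FaithfulSMul G (Fin 4)]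
    (hG : Nat.card G = 3) {f : G → Fin 4 → ZMod 3} (hf : IsCocycle₁ f)
    (hsum : ∀ g, ∑ i, f g i = 0) : IsCoboundary₁ f := by
  have : Fact (Nat.Prime 3) := ⟨Nat.prime_three⟩
  have : IsCyclic G := isCyclic_of_prime_card hG
  obtain ⟨σ, hgen⟩ := IsCyclic.exists_generator (α := G)
  have hσ : orderOf σ = 3 := hG ▸ orderOf_eq_card_of_forall_mem_zpowers hgen
  have hσ3 : σ ^ 3 = 1 := hσ ▸ pow_orderOf_eq_one σ
  let s := MulAction.toPermHom G (Fin 4) σ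
  have hs3 : s ^ 3 = 1 := by rw [← map_pow, hσ3, map_one]
  have hs1 : s ≠ 1 := by
    rw [Ne, ← map_one (MulAction.toPermHom G (Fin 4))]
    exact MulAction.toPerm_injective.ne fun h => by simp [h] at hσ
  have hnorm : f σ + σ • f σ + σ ^ 2 • f σ = 0 := by
    simpa [hσ3, map_one_of_isCocycle₁ hf, sum_range_succ] using
      (map_pow_of_isCocycle₁ hf σ 3).symm
  obtain ⟨b, hb⟩ := Equiv.Perm.exists_smul_sub_eq_of_pow_three_eq_one s hs3 hs1 (f σ) (hsum σ)
    (by rw [← map_pow]; exact hnorm)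
  exact hf.isCoboundary₁_of_zpowers_eq_top (eq_top_iff.mpr fun g _ => hgen g) hb

theorem IsCocycle₁.isCoboundary₁_of_card_dvd_three [FaithfulSMul G (Fin 4)]
    (hG : Nat.card G ∣ 3) {f : G → Fin 4 → ZMod 3} (hf : IsCocycle₁ f)
    (hsum : ∀ g, ∑ i, f g i = 0) : IsCoboundary₁ f := by
  rcases (Nat.dvd_prime Nat.prime_three).mp hG with hG1 | hG3
  · have : Subsingleton G := (Nat.card_eq_one_iff_unique.mp hG1).1
    refine ⟨0, fun g => ?_⟩
    rw [Subsingleton.elim g 1, map_one_of_isCocycle₁ hf, smul_zero, sub_zero]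
  · exact hf.isCoboundary₁_of_card_eq_three hG3 hsum

theorem IsCoboundary₁.exists_sum_eq_zero {f : G → Fin 4 → ZMod 3} (hf : IsCoboundary₁ f) :
    ∃ a : Fin 4 → ZMod 3, ∑ i, a i = 0 ∧ ∀ g, g • a - a = f g := by
  obtain ⟨a, ha⟩ := hf
  -- Constant vectors are invariant, and `4 = 1` in `𝔽₃` lets them absorb the coordinate sum.
  refine ⟨a - fun _ => ∑ i, a i, ?_, fun g => ?_⟩
  · simp only [Pi.sub_apply, sum_sub_distrib, sum_const, card_univ, Fintype.card_fin]
    rw [nsmul_eq_mul, show ((4 : ℕ) : ZMod 3) = 1 from rfl, one_mul, sub_self]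
  · rw [smul_sub, ← ha g]
    exact sub_sub_sub_cancel_right _ _ _

end Fin4

end groupCohomology

open groupCohomology

theorem Sylow.card_dvd_three_of_card_dvd {G : Type*} [Group G] [Finite G]
    (hG : Nat.card G ∣ 24) (P : Sylow 3 G) : Nat.card P ∣ 3 := by
  have : Fact (Nat.Prime 3) := ⟨Nat.prime_three⟩
  obtain ⟨n, hn⟩ := IsPGroup.iff_card.mp P.isPGroup'
  have h24 : 3 ^ n ∣ 24 := hn ▸ (Subgroup.card_subgroup_dvd_card (P : Subgroup G)).trans hG
  have hn1 : n ≤ 1 := by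
    by_contra h
    exact absurd ((pow_dvd_pow 3 (by omega : 2 ≤ n)).trans h24) (by norm_num)
  rw [hn, ← pow_one 3]
  exact pow_dvd_pow 3 hn1

theorem stmt3 (H : Subgroup (Equiv.Perm (Fin 4)))
    (f : H → (Fin 4 → ZMod 3))
    (hsum : ∀ g : H, ∑ i, f g i = 0)
    (hcocycle : ∀ g h : H,
      f (g * h) = (fun i => f h ((g⁻¹ : Equiv.Perm (Fin 4)) i)) + f g) :
    ∃ a : Fin 4 → ZMod 3, (∑ i, a i = 0) ∧
      ∀ g : H, f g = (fun i => a ((g⁻¹ : Equiv.Perm (Fin 4)) i)) - a := by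
  have : Fact (Nat.Prime 3) := ⟨Nat.prime_three⟩
  have hf : IsCocycle₁ f := hcocycle
  have hH : Nat.card H ∣ 24 :=
    (Subgroup.card_subgroup_dvd_card H).trans (by rw [Nat.card_perm, Nat.card_fin]; rfl)
  let P : Sylow 3 H := default
  have hP : IsUnit ((P : Subgroup H).index : ZMod 3) :=
    (ZMod.isUnit_iff_coprime _ _).mpr
      ((Nat.Prime.coprime_iff_not_dvd Nat.prime_three).mpr P.not_dvd_index).symm
  have hfP : IsCoboundary₁ fun p : (P : Subgroup H) => f p :=
    IsCocycle₁.isCoboundary₁_of_card_dvd_three (P.card_dvd_three_of_card_dvd hH)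
      (fun g h => hf g h) fun p => hsum p
  obtain ⟨a, ha0, ha⟩ := (hf.isCoboundary₁_of_isCoboundary₁_restrict hP hfP).exists_sum_eq_zero
  exact ⟨a, ha0, fun g => (ha g).symm⟩
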